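/- Let A, B ∈ ℂ^{n×n} be such that all diagonal entries of A − B are nonzero, let m ∈ ℕ, and let p be a polynomial over ℂ of degree at most m with p(A) ≠ 0. Set ε_p = ‖p(A) − p(A−B)‖ / ‖p(A)‖. Then β(ε_p, p(A)) ≤ m·λ(A−B). -/

import Mathlib

open scoped Matrix.Norms.L2Operator

/-- The bandwidth `l(M)` of a matrix: `max_{(i,j): M_{ij} ≠ 0} (j - i) +
max_{(i,j): M_{ij} ≠ 0} (i - j)`, with the convention `l(0) = 0`. -/
noncomputable def bandwidth {n : ℕ} (M : Matrix (Fin n) (Fin n) ℂ) : ℤ :=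
  letI := Classical.dec
  letI Ω : Finset (Fin n × Fin n) :=
    Finset.univ.filter fun p : Fin n × Fin n => M p.1 p.2 ≠ 0
  if h : Ω.Nonempty then
    (Ω.sup' h fun p => ((p.2 : ℤ) - (p.1 : ℤ))) +
      (Ω.sup' h fun p => ((p.1 : ℤ) - (p.2 : ℤ)))
  else 0

/-- The real bandwidth `λ(M)`: the minimum of `l(M^σ)` over all simultaneous
row/column permutations `σ`, where `(M^σ)_{ij} = M_{σ(i) σ(j)}`. -/
noncomputable def realBandwidth {n : ℕ} (M : Matrix (Fin n) (Fin n) ℂ) : ℤ :=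
  Finset.univ.inf' Finset.univ_nonempty
    fun σ : Equiv.Perm (Fin n) => bandwidth (Matrix.of fun i j => M (σ i) (σ j))

/-- The `ε`-bandwidth `β(ε, M) = min { λ(M - B') : ‖B'‖ ≤ ε‖M‖ }`, where `‖·‖`
is the operator norm on `ℂ^{n×n}` induced by the Euclidean norm on `ℂⁿ`. -/
noncomputable def epsBandwidth {n : ℕ} (ε : ℝ) (M : Matrix (Fin n) (Fin n) ℂ) : ℤ :=
  sInf {b : ℤ | ∃ B' : Matrix (Fin n) (Fin n) ℂ,
    ‖B'‖ ≤ ε * ‖M‖ ∧ b = realBandwidth (M - B')}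

lemma bandwidth_nonneg {n : ℕ} (M : Matrix (Fin n) (Fin n) ℂ) : 0 ≤ bandwidth M := by
  unfold bandwidth
  split_ifs with h
  · obtain ⟨q, hq⟩ := h
    have h1 := Finset.le_sup' (f := fun p : Fin n × Fin n => ((p.2 : ℤ) - (p.1 : ℤ))) (b := q) hq
    have h2 := Finset.le_sup' (f := fun p : Fin n × Fin n => ((p.1 : ℤ) - (p.2 : ℤ))) (b := q) hq
    omega
  · exact le_rfl

lemma realBandwidth_nonneg {n : ℕ} (M : Matrix (Fin n) (Fin n) ℂ) : 0 ≤ realBandwidth M := by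
  unfold realBandwidth
  exact Finset.le_inf' _ _ fun σ _ => bandwidth_nonneg _

lemma bandwidth_le {n : ℕ} {M : Matrix (Fin n) (Fin n) ℂ} {a b : ℤ} (ha : 0 ≤ a) (hb : 0 ≤ b)
    (h : ∀ i j : Fin n, M i j ≠ 0 → ((j : ℤ) - (i : ℤ) ≤ a ∧ (i : ℤ) - (j : ℤ) ≤ b)) :
    bandwidth M ≤ a + b := by
  unfold bandwidth
  split_ifs with hΩ
  · refine add_le_add (Finset.sup'_le _ _ fun q hq => ?_) (Finset.sup'_le _ _ fun q hq => ?_)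
    · simp only [Finset.mem_filter] at hq
      exact (h q.1 q.2 hq.2).1
    · simp only [Finset.mem_filter] at hq
      exact (h q.1 q.2 hq.2).2
  · omega

lemma bandwidth_spec {n : ℕ} (M : Matrix (Fin n) (Fin n) ℂ) (i₀ : Fin n) (h₀ : M i₀ i₀ ≠ 0) :
    ∃ a b : ℤ, 0 ≤ a ∧ 0 ≤ b ∧ bandwidth M = a + b ∧
      ∀ i j : Fin n, M i j ≠ 0 → ((j : ℤ) - (i : ℤ) ≤ a ∧ (i : ℤ) - (j : ℤ) ≤ b) := by
  unfold bandwidth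
  split_ifs with hΩ
  · obtain ⟨q1, hq1, e1⟩ := Finset.exists_mem_eq_sup' hΩ
      (fun q : Fin n × Fin n => ((q.2 : ℤ) - (q.1 : ℤ)))
    obtain ⟨q2, hq2, e2⟩ := Finset.exists_mem_eq_sup' hΩ
      (fun q : Fin n × Fin n => ((q.1 : ℤ) - (q.2 : ℤ)))
    refine ⟨_, _, ?_, ?_, by rw [e1, e2], fun i j hij => ?_⟩
    · rw [← e1]
      exact Finset.le_sup' (f := fun q : Fin n × Fin n => ((q.2 : ℤ) - (q.1 : ℤ)))
        (b := (i₀, i₀)) (by simpa using h₀) |>.trans_eq' (by simp)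
    · rw [← e2]
      exact Finset.le_sup' (f := fun q : Fin n × Fin n => ((q.1 : ℤ) - (q.2 : ℤ)))
        (b := (i₀, i₀)) (by simpa using h₀) |>.trans_eq' (by simp)
    constructor
    · rw [← e1]
      exact Finset.le_sup' (f := fun q : Fin n × Fin n => ((q.2 : ℤ) - (q.1 : ℤ)))
        (b := (i, j)) (by simpa using hij)
    · rw [← e2]
      exact Finset.le_sup' (f := fun q : Fin n × Fin n => ((q.1 : ℤ) - (q.2 : ℤ)))
        (b := (i, j)) (by simpa using hij)
  · exact absurd ⟨(i₀, i₀), by simpa using h₀⟩ hΩ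

lemma bandwidth_aeval_le {n : ℕ} [NeZero n] (N : Matrix (Fin n) (Fin n) ℂ)
    (hdiag : ∀ i, N i i ≠ 0) (m : ℕ) (p : Polynomial ℂ) (hdeg : p.natDegree ≤ m) :
    bandwidth (Polynomial.aeval N p) ≤ (m : ℤ) * bandwidth N := by
  have i₀ : Fin n := ⟨0, Nat.pos_of_ne_zero (NeZero.ne n)⟩
  obtain ⟨u, v, hu0, hv0, heq, hbound⟩ := bandwidth_spec N i₀ (hdiag i₀)
  have hu : ∀ i j : Fin n, N i j ≠ 0 → (j : ℤ) - (i : ℤ) ≤ u := fun i j h => (hbound i j h).1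
  have hv : ∀ i j : Fin n, N i j ≠ 0 → (i : ℤ) - (j : ℤ) ≤ v := fun i j h => (hbound i j h).2
  have hpow : ∀ k : ℕ, ∀ i j : Fin n, (N ^ k) i j ≠ 0 →
      (j : ℤ) - (i : ℤ) ≤ (k : ℤ) * u ∧ (i : ℤ) - (j : ℤ) ≤ (k : ℤ) * v := by
    intro k
    induction k with
    | zero =>
      intro i j h
      rw [pow_zero] at h
      have hij : i = j := by
        by_contra hij
        exact h (Matrix.one_apply_ne hij)
      subst hij; simp
    | succ k ih =>
      intro i j h
      rw [pow_succ, Matrix.mul_apply] at h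
      obtain ⟨t, -, ht⟩ := Finset.exists_ne_zero_of_sum_ne_zero h
      have h1 : (N ^ k) i t ≠ 0 := left_ne_zero_of_mul ht
      have h2 : N t j ≠ 0 := right_ne_zero_of_mul ht
      obtain ⟨a1, a2⟩ := ih i t h1
      have b1 := hu t j h2
      have b2 := hv t j h2
      constructor <;> push_cast <;> nlinarith [a1, a2, b1, b2]
  have hP : ∀ i j : Fin n, (Polynomial.aeval N p : Matrix (Fin n) (Fin n) ℂ) i j ≠ 0 →
      (j : ℤ) - (i : ℤ) ≤ (m : ℤ) * u ∧ (i : ℤ) - (j : ℤ) ≤ (m : ℤ) * v := by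
    intro i j h
    rw [Polynomial.aeval_eq_sum_range] at h
    simp only [Matrix.sum_apply] at h
    obtain ⟨k, hk, hne⟩ := Finset.exists_ne_zero_of_sum_ne_zero h
    have hk' : (k : ℤ) ≤ (m : ℤ) := by
      have := Nat.lt_succ_iff.mp (Finset.mem_range.mp hk)
      exact_mod_cast this.trans hdeg
    have hNk : (N ^ k) i j ≠ 0 := by
      intro h0
      apply hne
      rw [Matrix.smul_apply, h0, smul_zero]
    obtain ⟨c1, c2⟩ := hpow k i j hNk
    exact ⟨c1.trans (mul_le_mul_of_nonneg_right hk' hu0),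
      c2.trans (mul_le_mul_of_nonneg_right hk' hv0)⟩
  calc bandwidth (Polynomial.aeval N p) ≤ (m : ℤ) * u + (m : ℤ) * v :=
        bandwidth_le (by positivity) (by positivity) hP
    _ = (m : ℤ) * bandwidth N := by rw [heq]; ring

lemma realBandwidth_aeval_le {n : ℕ} [NeZero n] (N : Matrix (Fin n) (Fin n) ℂ)
    (hdiag : ∀ i, N i i ≠ 0) (m : ℕ) (p : Polynomial ℂ) (hdeg : p.natDegree ≤ m) :
    realBandwidth (Polynomial.aeval N p) ≤ (m : ℤ) * realBandwidth N := by
  unfold realBandwidth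
  obtain ⟨σ, -, hσ⟩ := Finset.exists_mem_eq_inf' (Finset.univ_nonempty)
    (fun σ : Equiv.Perm (Fin n) => bandwidth (Matrix.of fun i j => N (σ i) (σ j)))
  rw [hσ]
  have key : (Matrix.of fun i j => (Polynomial.aeval N p : Matrix (Fin n) (Fin n) ℂ) (σ i) (σ j))
      = Polynomial.aeval (Matrix.of fun i j => N (σ i) (σ j)) p := by
    have h1 : ∀ M : Matrix (Fin n) (Fin n) ℂ,
        (Matrix.of fun i j => M (σ i) (σ j)) = Matrix.reindexAlgEquiv ℂ ℂ σ.symm M := by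
      intro M
      ext i j
      simp [Matrix.reindexAlgEquiv, Matrix.reindex]
    rw [h1, h1, ← Polynomial.aeval_algHom_apply]
  calc (Finset.univ.inf' Finset.univ_nonempty fun τ : Equiv.Perm (Fin n) =>
          bandwidth (Matrix.of fun i j =>
            (Polynomial.aeval N p : Matrix (Fin n) (Fin n) ℂ) (τ i) (τ j)))
      ≤ bandwidth (Matrix.of fun i j =>
          (Polynomial.aeval N p : Matrix (Fin n) (Fin n) ℂ) (σ i) (σ j)) :=
        Finset.inf'_le _ (Finset.mem_univ σ)
    _ = bandwidth (Polynomial.aeval (Matrix.of fun i j => N (σ i) (σ j)) p) := by rw [key]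
    _ ≤ (m : ℤ) * bandwidth (Matrix.of fun i j => N (σ i) (σ j)) :=
        bandwidth_aeval_le _ (fun i => hdiag (σ i)) m p hdeg

/-- Lemma 3(b) of the paper: if all diagonal entries of `A - B` are nonzero and
`p` is a polynomial of degree at most `m` with `p(A) ≠ 0`, then, with
`ε_p = ‖p(A) - p(A-B)‖ / ‖p(A)‖`, one has `β(ε_p, p(A)) ≤ m·λ(A-B)`. -/
theorem epsBandwidth_polynomial_le {n : ℕ} (A B : Matrix (Fin n) (Fin n) ℂ)
    (hdiag : ∀ i, (A - B) i i ≠ 0) (m : ℕ) (p : Polynomial ℂ)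
    (hdeg : p.natDegree ≤ m) (hne : Polynomial.aeval A p ≠ 0) :
    epsBandwidth (‖Polynomial.aeval A p - Polynomial.aeval (A - B) p‖ /
        ‖Polynomial.aeval A p‖) (Polynomial.aeval A p) ≤
      (m : ℤ) * realBandwidth (A - B) := by
  rcases Nat.eq_zero_or_pos n with hn | hn
  · subst hn
    exact absurd (Subsingleton.elim _ _) hne
  haveI : NeZero n := ⟨hn.ne'⟩
  have hPA : ‖(Polynomial.aeval A p : Matrix (Fin n) (Fin n) ℂ)‖ ≠ 0 :=
    norm_ne_zero_iff.mpr hne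
  have hbdd : BddBelow {b : ℤ | ∃ B' : Matrix (Fin n) (Fin n) ℂ,
      ‖B'‖ ≤ ‖Polynomial.aeval A p - Polynomial.aeval (A - B) p‖ / ‖Polynomial.aeval A p‖ *
        ‖Polynomial.aeval A p‖ ∧
      b = realBandwidth (Polynomial.aeval A p - B')} := by
    refine ⟨0, fun b hb => ?_⟩
    obtain ⟨B', -, rfl⟩ := hb
    exact realBandwidth_nonneg _
  have hmem : realBandwidth (Polynomial.aeval (A - B) p) ∈
      {b : ℤ | ∃ B' : Matrix (Fin n) (Fin n) ℂ,
        ‖B'‖ ≤ ‖Polynomial.aeval A p - Polynomial.aeval (A - B) p‖ / ‖Polynomial.aeval A p‖ *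
          ‖Polynomial.aeval A p‖ ∧
        b = realBandwidth (Polynomial.aeval A p - B')} := by
    refine ⟨Polynomial.aeval A p - Polynomial.aeval (A - B) p, ?_, ?_⟩
    · rw [div_mul_cancel₀ _ hPA]
    · rw [sub_sub_cancel]
  calc epsBandwidth _ (Polynomial.aeval A p) ≤ realBandwidth (Polynomial.aeval (A - B) p) :=
        csInf_le hbdd hmem
    _ ≤ (m : ℤ) * realBandwidth (A - B) := realBandwidth_aeval_le _ hdiag m p hdeg
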